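/- The following hold in LFI3, where p, q are distinct propositional atoms: (1) for every formula α and β, α∧¬α ⊨_LFI3 ∘∘α; (2) ∘∘p ⊭_LFI3 p∧¬p; (3) ∘p ⊭_LFI3 ∘∘p; (4) ∘∘p ⊭_LFI3 ∘p; (5) ¬∘p ⊭_LFI3 p∧¬p; (6) for every formula α, α∧¬α ⊨_LFI3 ¬∘α. -/

import Mathlib

/-- Formulas of the language with ¬, ∘, ∧, ∨, →. -/
inductive Fm : Type
  | atom : Nat → Fm
  | neg : Fm → Fm
  | circ : Fm → Fm
  | conj : Fm → Fm → Fm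
  | disj : Fm → Fm → Fm
  | impl : Fm → Fm → Fm

/-- The five truth values of LFI3: T=(1,0,0), t=(1,0,1), b=(1,1,1), f=(0,1,1), F=(0,1,0). -/
inductive V5 : Type
  | T | t | b | f | F
deriving DecidableEq

open V5

/-- Rank in the linear order F < f < b < t < T. -/
def rk : V5 → Nat
  | F => 0 | f => 1 | b => 2 | t => 3 | T => 4

/-- Infimum in the linear order F < f < b < t < T. -/
def min5 (x y : V5) : V5 := if rk x ≤ rk y then x else y

/-- Supremum in the linear order F < f < b < t < T. -/
def max5 (x y : V5) : V5 := if rk x ≤ rk y then y else x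

/-- Negation: ¬(a₁,a₂,a₃) = (a₂,a₁,a₃). -/
def neg5 : V5 → V5
  | T => F | t => f | b => b | f => t | F => T

/-- Consistency: ∘(a₁,a₂,a₃) = (~(a₁∧a₂), a₃, a₃∧~(a₁∧a₂)). -/
def circ5 : V5 → V5
  | T => T | t => b | b => F | f => b | F => T

/-- Strong negation ~a := ¬a ∧ ∘a. -/
def snd5 (x : V5) : V5 := min5 (neg5 x) (circ5 x)

/-- Implication a→b := ~a ∨ b. -/
def imp5 (x y : V5) : V5 := max5 (snd5 x) y

/-- Designated values: D = {T, t, b}. -/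
def des (x : V5) : Prop := 2 ≤ rk x

/-- The valuation (homomorphism into the LFI3 algebra) extending an atom assignment. -/
def ev (v : Nat → V5) : Fm → V5
  | Fm.atom n => v n
  | Fm.neg a => neg5 (ev v a)
  | Fm.circ a => circ5 (ev v a)
  | Fm.conj a c => min5 (ev v a) (ev v c)
  | Fm.disj a c => max5 (ev v a) (ev v c)
  | Fm.impl a c => imp5 (ev v a) (ev v c)

/-- Semantical consequence of LFI3. -/
def L3Cons (Γ : Set Fm) (ψ : Fm) : Prop :=
  ∀ v : Nat → V5, (∀ γ ∈ Γ, des (ev v γ)) → des (ev v ψ)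

/-! A contradiction `α ∧ ¬α` is designated only when `α` takes the value `b`, and `∘b = F`,
so `∘∘α` and `¬∘α` both take the value `T`. The non-consequences are witnessed by constant
valuations. -/

instance : DecidablePred des := fun x => by unfold des; infer_instance

theorem eq_b_of_des_min_neg (x : V5) (h : des (min5 x (neg5 x))) : x = b := by
  cases x <;> first | rfl | exact absurd h (by decide)

theorem L3Cons_conj_neg_of_des_at_b {α ψ : Fm}
    (hψ : ∀ v : Nat → V5, ev v α = b → des (ev v ψ)) : L3Cons {α.conj α.neg} ψ :=
  fun v hv => hψ v (eq_b_of_des_min_neg _ (hv _ rfl))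

theorem not_L3Cons_singleton {φ ψ : Fm} (v : Nat → V5) (hφ : des (ev v φ))
    (hψ : ¬ des (ev v ψ)) : ¬ L3Cons {φ} ψ :=
  fun h => hψ (h v fun _ hγ => hγ ▸ hφ)

/-- Properties of consistency, inconsistency and contradiction in LFI3,
where p is a propositional atom. -/
theorem stmt14 :
    (∀ α : Fm, L3Cons {α.conj α.neg} α.circ.circ) ∧
    (¬ L3Cons {(Fm.atom 0).circ.circ} ((Fm.atom 0).conj (Fm.atom 0).neg)) ∧
    (¬ L3Cons {(Fm.atom 0).circ} (Fm.atom 0).circ.circ) ∧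
    (¬ L3Cons {(Fm.atom 0).circ.circ} (Fm.atom 0).circ) ∧
    (¬ L3Cons {(Fm.atom 0).circ.neg} ((Fm.atom 0).conj (Fm.atom 0).neg)) ∧
    (∀ α : Fm, L3Cons {α.conj α.neg} α.circ.neg) := by
  refine ⟨fun α => L3Cons_conj_neg_of_des_at_b fun v hα => ?_,
    not_L3Cons_singleton (fun _ => T) (by decide) (by decide),
    not_L3Cons_singleton (fun _ => t) (by decide) (by decide),
    not_L3Cons_singleton (fun _ => b) (by decide) (by decide),
    not_L3Cons_singleton (fun _ => t) (by decide) (by decide),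
    fun α => L3Cons_conj_neg_of_des_at_b fun v hα => ?_⟩ <;>
  simp only [ev, hα] <;> decide
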